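/- For a, b, c ∈ ℕⁿ with c ⪯ b ⪯ a, the Stanley depth of the interval module kₐ[c,b] equals #{i : bᵢ ≥ aᵢ}. -/

import Mathlib

open MvPolynomial

/-- The polynomial ring `S = k[x₁,…,xₙ]`. -/
abbrev PS (k : Type) [Field k] (n : ℕ) : Type := MvPolynomial (Fin n) k

/-- The `i`-th unit vector in `ℤⁿ`. -/
def eZ (n : ℕ) (i : Fin n) : Fin n → ℤ := fun j => if j = i then 1 else 0

/-- Inclusion `ℕⁿ → ℤⁿ`. -/
def natDeg {n : ℕ} (d : Fin n → ℕ) : Fin n → ℤ := fun i => (d i : ℤ)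

/-- Function `Fin n → ℕ` as a finitely supported function (exponent of a monomial). -/
noncomputable def toFs {n : ℕ} (d : Fin n → ℕ) : Fin n →₀ ℕ := Finsupp.equivFunOnFinite.symm d

/-- A `ℤⁿ`-grading of an `S`-module `M`: a direct sum decomposition of `M` into
`k`-subspaces compatible with multiplication by the variables. -/
structure MGrading (k : Type) [Field k] (n : ℕ) (M : Type) [AddCommGroup M]
    [Module (PS k n) M] [Module k M] [IsScalarTower k (PS k n) M] where
  piece : (Fin n → ℤ) → Submodule k M
  indep : iSupIndep piece
  total : ⨆ d, piece d = ⊤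
  smul_mem : ∀ (i : Fin n) (d : Fin n → ℤ) (m : M),
    m ∈ piece d → (X i : PS k n) • m ∈ piece (d + eZ n i)

section Core

variable {k : Type} [Field k] {n : ℕ} {M : Type} [AddCommGroup M]
  [Module (PS k n) M] [Module k M] [IsScalarTower k (PS k n) M]

/-- The `k`-subspace `m·k[Z]` spanned by the multiples of `m` by monomials in the
variables of `Z`. -/
def stanleySub (m : M) (Z : Finset (Fin n)) : Submodule k M :=
  Submodule.span k
    {y | ∃ b : Fin n →₀ ℕ, (∀ j ∈ b.support, j ∈ Z) ∧ y = (monomial b (1 : k) : PS k n) • m}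

/-- A Stanley decomposition of a `ℤⁿ`-graded module `M`: finitely many homogeneous
elements `mᵢ` and sets of variables `Zᵢ` such that each `mᵢ k[Zᵢ]` is a free Stanley
space and `M` is their direct sum as (`ℤⁿ`-graded) `k`-vector spaces. -/
structure StanleyDecomp (gr : MGrading k n M) where
  s : ℕ
  elem : Fin s → M
  deg : Fin s → (Fin n → ℤ)
  Z : Fin s → Finset (Fin n)
  homog : ∀ i, elem i ∈ gr.piece (deg i)
  free : ∀ i, LinearIndependent k
    (fun b : {b : Fin n →₀ ℕ // ∀ j ∈ b.support, j ∈ Z i} =>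
      ((monomial (b : Fin n →₀ ℕ) (1 : k) : PS k n) • elem i : M))
  indep : iSupIndep (fun i => (stanleySub (elem i) (Z i) : Submodule k M))
  total : (⨆ i, (stanleySub (elem i) (Z i) : Submodule k M)) = ⊤

/-- The Stanley depth of a `ℤⁿ`-graded module: the largest `d` such that there is a
Stanley decomposition all of whose Stanley spaces have at least `d` free variables. -/
noncomputable def sdepth (gr : MGrading k n M) : ℕ :=
  sSup {d | ∃ D : StanleyDecomp gr, ∀ i, d ≤ (D.Z i).card}

/-- A grading is positively `a`-determined: concentrated in `ℕⁿ`, and multiplication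
by `xᵢ : M_d → M_{d+eᵢ}` is bijective whenever `d i ≥ a i`. -/
structure IsPosDet (a : Fin n → ℕ) (gr : MGrading k n M) : Prop where
  nonneg : ∀ d : Fin n → ℤ, (∃ i, d i < 0) → gr.piece d = ⊥
  inj : ∀ (d : Fin n → ℕ) (i : Fin n), a i ≤ d i → ∀ m ∈ gr.piece (natDeg d),
    ∀ m' ∈ gr.piece (natDeg d),
      (X i : PS k n) • m = (X i : PS k n) • m' → m = m'
  surj : ∀ (d : Fin n → ℕ) (i : Fin n), a i ≤ d i →
    ∀ m' ∈ gr.piece (natDeg d + eZ n i),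
      ∃ m ∈ gr.piece (natDeg d), (X i : PS k n) • m = m'

/-- A Stanley decomposition is positively `a`-determined: all degrees `deg i` lie in
`[0,a]` and `{x_j : a j ≤ (deg i) j} ⊆ Z i`. -/
def StanleyDecomp.IsPosDetDecomp {gr : MGrading k n M} (a : Fin n → ℕ)
    (D : StanleyDecomp gr) : Prop :=
  ∀ i, ∃ d : Fin n → ℕ, D.deg i = natDeg d ∧ (∀ j, d j ≤ a j) ∧
    (∀ j, a j ≤ d j → j ∈ D.Z i)

/-- `#{j : a j ≤ b j}`, the cardinality of `suppᵃ(b)`. -/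
def suppCardA {n : ℕ} (a b : Fin n → ℕ) : ℕ :=
  (Finset.univ.filter (fun j => a j ≤ b j)).card

/-- `#supp(c) = #{j : c j ≥ 1}`. -/
def suppCard {n : ℕ} (c : Fin n → ℕ) : ℕ :=
  (Finset.univ.filter (fun j => 1 ≤ c j)).card

/-- `#supp(b)` for `b ∈ ℤⁿ`. -/
def suppCardZ {n : ℕ} (b : Fin n → ℤ) : ℕ :=
  (Finset.univ.filter (fun j => 1 ≤ b j)).card

/-- The set `[[c,b]]ₐ` of degrees where the interval module `kₐ[c,b]` is nonzero. -/
def intervalSet {n : ℕ} (a c b : Fin n → ℕ) : Set (Fin n → ℕ) :=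
  {d | (∀ i, c i ≤ d i) ∧ ∀ i, b i < a i → d i ≤ b i}

/-- A positively `a`-determined quasi Stanley decomposition of an (`ℕⁿ`-graded)
module `M`, encoded by the images `f i d` of the monomial basis elements `x̄^d` of the
interval modules `kₐ[cᵢ,bᵢ]` under a graded `k`-linear bijection
`⊕ᵢ kₐ[cᵢ,bᵢ] → M` satisfying `f(x̄^d) = x^{d-cᵢ}·f(x̄^{cᵢ})`. -/
structure QSDecomp (a : Fin n → ℕ) (gr : MGrading k n M) where
  s : ℕ
  c : Fin s → (Fin n → ℕ)
  b : Fin s → (Fin n → ℕ)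
  cb : ∀ i j, c i j ≤ b i j
  ba : ∀ i j, b i j ≤ a j
  f : Fin s → (Fin n → ℕ) → M
  compat : ∀ i d, d ∈ intervalSet a (c i) (b i) →
    f i d = (monomial (toFs (fun j => d j - c i j)) (1 : k) : PS k n) • f i (c i)
  mem : ∀ i d, d ∈ intervalSet a (c i) (b i) → f i d ∈ gr.piece (natDeg d)
  li : ∀ d : Fin n → ℕ, LinearIndependent k
    (fun i : {i : Fin s // d ∈ intervalSet a (c i) (b i)} => (f (i : Fin s) d : M))
  span : ∀ d : Fin n → ℕ, gr.piece (natDeg d) =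
    Submodule.span k {y | ∃ i : Fin s, d ∈ intervalSet a (c i) (b i) ∧ y = f i d}

/-- `shreg` computed via positively `a`-determined quasi Stanley decompositions. -/
noncomputable def shregA (a : Fin n → ℕ) (gr : MGrading k n M) : ℕ :=
  sInf {r | ∃ D : QSDecomp a gr, ∀ i, suppCard (D.c i) ≤ r}

/-- `shreg(M)`: minimum over all quasi Stanley decompositions (for all `a`) of the
maximal support-cardinality of the bottom degrees `cᵢ`. -/
noncomputable def shreg (gr : MGrading k n M) : ℕ :=
  sInf {r | ∃ a : Fin n → ℕ, ∃ D : QSDecomp a gr, ∀ i, suppCard (D.c i) ≤ r}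

end Core

/-- Depth of an `S`-module with respect to the ideal `(x₁,…,xₙ)`: the supremum of
lengths of regular sequences consisting of elements of `(x₁,…,xₙ)`. -/
noncomputable def mdepth (k : Type) [Field k] (n : ℕ) (M : Type) [AddCommGroup M]
    [Module (PS k n) M] : ℕ :=
  sSup {d | ∃ rs : List (PS k n), rs.length = d ∧
    (∀ r ∈ rs, r ∈ Ideal.span (Set.range (X : Fin n → PS k n))) ∧
    RingTheory.Sequence.IsRegular M rs}

/-- Krull dimension of an `S`-module, i.e. the Krull dimension of `S/ann(M)`. -/
noncomputable def mdim (k : Type) [Field k] (n : ℕ) (M : Type) [AddCommGroup M]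
    [Module (PS k n) M] : WithBot (WithTop ℕ) :=
  ringKrullDim (PS k n ⧸ Module.annihilator (PS k n) M)

/-- An `S`-module is Cohen–Macaulay if its depth equals its Krull dimension. -/
def IsCMmod (k : Type) [Field k] (n : ℕ) (M : Type) [AddCommGroup M]
    [Module (PS k n) M] : Prop :=
  (mdepth k n M : WithBot (WithTop ℕ)) = mdim k n M

/-- The defining ideal of the interval module `kₐ[c,b]`:
generated by `xᵢ^{bᵢ-cᵢ+1}` for the `i` with `bᵢ < aᵢ`. -/
noncomputable def intervalIdeal (k : Type) [Field k] {n : ℕ} (a c b : Fin n → ℕ) : Ideal (PS k n) :=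
  Ideal.span {p | ∃ i, b i < a i ∧ p = (X i : PS k n) ^ (b i - c i + 1)}

/-- The interval module `kₐ[c,b] = x^c · S/(xᵢ^{bᵢ+1} : bᵢ < aᵢ)`, realized (up to the
degree shift by `c`, which is recorded in the grading `intervalPiece`) as the quotient
`S/(xᵢ^{bᵢ-cᵢ+1} : bᵢ < aᵢ)`. -/
abbrev IntervalMod (k : Type) [Field k] {n : ℕ} (a c b : Fin n → ℕ) : Type :=
  PS k n ⧸ intervalIdeal k a c b

/-- The graded piece of `kₐ[c,b]` in degree `d`: spanned by (the image of) the
monomial `x^{d-c}` when `d ⪰ c`, and `0` otherwise. -/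
noncomputable def intervalPiece (k : Type) [Field k] {n : ℕ} (a c b : Fin n → ℕ)
    (d : Fin n → ℤ) : Submodule k (IntervalMod k a c b) :=
  Submodule.span k {y | ∃ e : Fin n →₀ ℕ, (∀ i, d i = c i + e i) ∧
    y = Ideal.Quotient.mk (intervalIdeal k a c b) (monomial e (1 : k))}

/-- `d - eᵢ` in `ℕⁿ`. -/
def subE {n : ℕ} (d : Fin n → ℕ) (i : Fin n) : Fin n → ℕ :=
  fun j => if j = i then d j - 1 else d j

/-- `N` is (isomorphic to) the Alexander dual `𝒜ₐ(M)` of `M`:  there is a family of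
perfect `k`-bilinear pairings `N_d × M_{a-d} → k` (for `d ∈ [0,a]`) intertwining
multiplication by `xᵢ` on the two sides. -/
structure IsAlexDual {k : Type} [Field k] {n : ℕ} {M N : Type}
    [AddCommGroup M] [Module (PS k n) M] [Module k M] [IsScalarTower k (PS k n) M]
    [AddCommGroup N] [Module (PS k n) N] [Module k N] [IsScalarTower k (PS k n) N]
    (a : Fin n → ℕ) (grM : MGrading k n M) (grN : MGrading k n N) : Prop where
  exists_pairing : ∃ B : (Fin n → ℕ) → N → M → k,
    (∀ d y y' m, B d (y + y') m = B d y m + B d y' m) ∧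
    (∀ d (r : k) y m, B d (r • y) m = r * B d y m) ∧
    (∀ d y m m', B d y (m + m') = B d y m + B d y m') ∧
    (∀ d (r : k) y m, B d y (r • m) = r * B d y m) ∧
    (∀ d : Fin n → ℕ, (∀ j, d j ≤ a j) →
      (∀ y ∈ grN.piece (natDeg d),
        (∀ m ∈ grM.piece (natDeg (fun j => a j - d j)), B d y m = 0) → y = 0) ∧
      (∀ m ∈ grM.piece (natDeg (fun j => a j - d j)),
        (∀ y ∈ grN.piece (natDeg d), B d y m = 0) → m = 0)) ∧
    (∀ (d : Fin n → ℕ) (i : Fin n), (∀ j, d j ≤ a j) → 1 ≤ d i →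
      ∀ y ∈ grN.piece (natDeg (subE d i)),
        ∀ m ∈ grM.piece (natDeg (fun j => a j - d j)),
          B d ((X i : PS k n) • y) m = B (subE d i) y ((X i : PS k n) • m))

section Skel

variable {k : Type} [Field k] {n : ℕ} {M : Type} [AddCommGroup M]
  [Module (PS k n) M] [Module k M] [IsScalarTower k (PS k n) M]

/-- `M^{≥l}` (i.e. `M^{>l-1}`): the `S`-submodule of `M` generated by all graded
components `M_d` with `#suppᵃ(d) ≥ l`. -/
noncomputable def skelSubGe (a : Fin n → ℕ) (gr : MGrading k n M) (l : ℕ) : Submodule (PS k n) M :=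
  Submodule.span (PS k n)
    {m : M | ∃ d : Fin n → ℕ, l ≤ suppCardA a d ∧ m ∈ gr.piece (natDeg d)}

/-- `M^{>l}`: the `S`-submodule of `M` generated by all graded components `M_d` with
`#suppᵃ(d) > l`. -/
noncomputable def skelSubGt (a : Fin n → ℕ) (gr : MGrading k n M) (l : ℕ) : Submodule (PS k n) M :=
  skelSubGe a gr (l + 1)

end Skel

/-- The monomial `x^d`. -/
noncomputable def mono (k : Type) [Field k] {n : ℕ} (d : Fin n → ℕ) : PS k n :=
  monomial (toFs d) (1 : k)

/-- The sliding operation `a ◁ b`. -/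
def slide {n : ℕ} (a b : Fin n → ℕ) : Fin n → ℕ :=
  fun i => if a i = 0 then 0 else a i + b i

/-- The irreducible monomial ideal `𝔪^a = (xᵢ^{aᵢ} : aᵢ > 0)`. -/
noncomputable def irrIdeal (k : Type) [Field k] {n : ℕ} (a : Fin n → ℕ) : Ideal (PS k n) :=
  Ideal.span {p | ∃ i, 0 < a i ∧ p = (X i : PS k n) ^ (a i)}

/-- The degree-`d` piece of the natural monomial grading of `S/I` for a monomial
ideal `I`: spanned by the image of the monomial of degree `d`. -/
noncomputable def quotMonPiece (k : Type) [Field k] {n : ℕ} (I : Ideal (PS k n))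
    (d : Fin n → ℤ) : Submodule k (PS k n ⧸ I) :=
  Submodule.span k {y | ∃ e : Fin n →₀ ℕ, (∀ i, d i = e i) ∧
    y = Ideal.Quotient.mk I (monomial e (1 : k))}

/-- The degree-`d` piece of the natural monomial grading of a monomial ideal `I`
(regarded as an `S`-module): spanned by the monomial of degree `d` if it lies in `I`. -/
noncomputable def idealMonPiece (k : Type) [Field k] {n : ℕ} (I : Ideal (PS k n))
    (d : Fin n → ℤ) : Submodule k ↥I :=
  Submodule.span k {y : ↥I | ∃ e : Fin n →₀ ℕ, (∀ i, d i = e i) ∧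
    (y : PS k n) = monomial e (1 : k)}

/-! The standard monomials `x^g` (with `g j ≤ b j - c j` whenever `b j < a j`) form a `k`-basis
of `kₐ[c,b]`. A bounded variable `x_j` (`b j < a j`) acts nilpotently, so it cannot be free in
any Stanley space, and a Stanley space has at most `#{j : a j ≤ b j}` free variables.
Conversely, grouping the standard monomials by their restriction to the bounded variables gives
a Stanley decomposition whose spaces all have exactly the variables `x_j`, `a j ≤ b j`, free. -/

lemma LinearIndependent.iSupIndep_span_range_sigma {R M : Type*} [Ring R] [AddCommGroup M]
    [Module R M] {ι : Type*} {κ : ι → Type*} {w : (Σ i, κ i) → M} (hw : LinearIndependent R w) :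
    iSupIndep fun i => Submodule.span R (Set.range fun x : κ i => w ⟨i, x⟩) := by
  intro i
  refine (hw.disjoint_span_image (s := {p | p.1 = i}) (t := {p | p.1 ≠ i})
    (Set.disjoint_left.2 fun _ h h' => h' h)).mono ?_ ?_
  · exact Submodule.span_mono <| by rintro _ ⟨x, rfl⟩; exact ⟨⟨i, x⟩, rfl, rfl⟩
  · exact iSup₂_le fun j hj => Submodule.span_mono <| by
      rintro _ ⟨x, rfl⟩; exact ⟨⟨j, x⟩, hj, rfl⟩

section Stanley

variable {k : Type} [Field k] {n : ℕ} {M : Type} [AddCommGroup M] [Module k M]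

lemma stanleySub_eq_span_range [Module (PS k n) M] (m : M) (Z : Finset (Fin n)) :
    stanleySub (k := k) m Z = Submodule.span k
      (Set.range fun β : {β : Fin n →₀ ℕ // ∀ j ∈ β.support, j ∈ Z} =>
        (monomial (β : Fin n →₀ ℕ) (1 : k) : PS k n) • m) := by
  rw [stanleySub]
  congr 1
  ext y
  constructor
  · rintro ⟨β, hβ, rfl⟩; exact ⟨⟨β, hβ⟩, rfl⟩
  · rintro ⟨β, rfl⟩; exact ⟨β, β.2, rfl⟩

variable [Module (PS k n) M] [IsScalarTower k (PS k n) M]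

noncomputable def StanleyDecomp.ofBasis {gr : MGrading k n M} {s : ℕ} (elem : Fin s → M)
    (deg : Fin s → (Fin n → ℤ)) (Z : Fin s → Finset (Fin n))
    (homog : ∀ i, elem i ∈ gr.piece (deg i))
    (hli : LinearIndependent k fun p : Σ i, {β : Fin n →₀ ℕ // ∀ j ∈ β.support, j ∈ Z i} =>
      (monomial (p.2 : Fin n →₀ ℕ) (1 : k) : PS k n) • elem p.1)
    (hspan : Submodule.span k (Set.range fun p : Σ i,
      {β : Fin n →₀ ℕ // ∀ j ∈ β.support, j ∈ Z i} =>
        (monomial (p.2 : Fin n →₀ ℕ) (1 : k) : PS k n) • elem p.1) = ⊤) :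
    StanleyDecomp gr where
  s := s
  elem := elem
  deg := deg
  Z := Z
  homog := homog
  free i := hli.comp (Sigma.mk i) sigma_mk_injective
  indep := by
    simp_rw [stanleySub_eq_span_range]
    exact hli.iSupIndep_span_range_sigma
  total := by
    rw [Set.range_sigma_eq_iUnion_range, Submodule.span_iUnion] at hspan
    simpa only [stanleySub_eq_span_range] using hspan

namespace StanleyDecomp

variable {gr : MGrading k n M}

lemma s_pos [Nontrivial M] (D : StanleyDecomp gr) : 0 < D.s := by
  by_contra! h
  have : IsEmpty (Fin D.s) := by rw [Nat.le_zero.1 h]; infer_instance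
  obtain ⟨x, hx⟩ := exists_ne (0 : M)
  have htop := D.total
  rw [iSup_of_empty] at htop
  exact hx ((Submodule.mem_bot k).1 (htop ▸ Submodule.mem_top))

lemma notMem_Z_of_X_pow_smul_eq_zero (D : StanleyDecomp gr) {j : Fin n} {t : ℕ}
    (h : ∀ m : M, (X j ^ t : PS k n) • m = 0) (i : Fin D.s) : j ∉ D.Z i := by
  intro hj
  have hsupp : ∀ j' ∈ (Finsupp.single j t).support, j' ∈ D.Z i := fun j' hj' => by
    rwa [Finset.mem_singleton.1 (Finsupp.support_single_subset hj')]
  exact (D.free i).ne_zero ⟨_, hsupp⟩ (by simpa [X_pow_eq_monomial] using h (D.elem i))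

end StanleyDecomp

lemma le_sdepth [Nontrivial M] {gr : MGrading k n M} {N : ℕ} (D : StanleyDecomp gr)
    (hD : ∀ i, N ≤ (D.Z i).card) : N ≤ sdepth gr := by
  refine le_csSup ⟨n, ?_⟩ ⟨D, hD⟩
  rintro d ⟨D', hD'⟩
  exact (hD' ⟨0, D'.s_pos⟩).trans ((Finset.card_le_univ _).trans_eq (Fintype.card_fin n))

lemma sdepth_le {gr : MGrading k n M} {N : ℕ}
    (h : ∀ D : StanleyDecomp gr, ∃ i, (D.Z i).card ≤ N) : sdepth gr ≤ N := by
  refine csSup_le' ?_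
  rintro d ⟨D, hD⟩
  obtain ⟨i, hi⟩ := h D
  exact (hD i).trans hi

end Stanley

section IntervalMod

variable {k : Type} [Field k] {n : ℕ} (a c b : Fin n → ℕ)

/-- `x^g` is a standard monomial of `intervalIdeal k a c b`, i.e. it lies outside it. -/
def IsStandardExp (g : Fin n →₀ ℕ) : Prop := ∀ j, b j < a j → g j ≤ b j - c j

lemma intervalIdeal_eq_span_monomial : intervalIdeal k a c b = Ideal.span
    ((monomial · (1 : k)) '' {g | ∃ j, b j < a j ∧ g = Finsupp.single j (b j - c j + 1)}) := by
  rw [intervalIdeal]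
  congr 1
  ext p
  simp [X_pow_eq_monomial, eq_comm]

lemma mem_intervalIdeal_iff {p : PS k n} :
    p ∈ intervalIdeal k a c b ↔ ∀ g ∈ p.support, ¬ IsStandardExp a c b g := by
  rw [intervalIdeal_eq_span_monomial, mem_ideal_span_monomial_image]
  refine forall₂_congr fun g _ => ?_
  simp only [IsStandardExp, not_forall, not_le, exists_prop]
  constructor
  · rintro ⟨_, ⟨j, hj, rfl⟩, hle⟩
    exact ⟨j, hj, Finsupp.single_le_iff.1 hle⟩
  · rintro ⟨j, hj, hlt⟩
    exact ⟨_, ⟨j, hj, rfl⟩, Finsupp.single_le_iff.2 hlt⟩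

lemma mk_monomial_eq_zero {g : Fin n →₀ ℕ} (hg : ¬ IsStandardExp a c b g) :
    Ideal.Quotient.mk (intervalIdeal k a c b) (monomial g (1 : k)) = 0 := by
  rw [Ideal.Quotient.eq_zero_iff_mem, mem_intervalIdeal_iff]
  simpa [support_monomial] using hg

lemma intervalIdeal_ne_top : intervalIdeal k a c b ≠ ⊤ := by
  rw [Ne, Ideal.eq_top_iff_one, mem_intervalIdeal_iff]
  simp [IsStandardExp]

instance : Nontrivial (IntervalMod k a c b) :=
  Ideal.Quotient.nontrivial_iff.2 (intervalIdeal_ne_top a c b)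

lemma X_pow_smul_intervalMod {j : Fin n} (hj : b j < a j) (m : IntervalMod k a c b) :
    (X j ^ (b j - c j + 1) : PS k n) • m = 0 := by
  obtain ⟨p, rfl⟩ := Ideal.Quotient.mk_surjective m
  change Ideal.Quotient.mk _ (X j ^ (b j - c j + 1) * p) = 0
  rw [Ideal.Quotient.eq_zero_iff_mem]
  exact Ideal.mul_mem_right _ _ (Ideal.subset_span ⟨j, hj, rfl⟩)

lemma linearIndependent_mk_monomial_standard :
    LinearIndependent k fun g : {g // IsStandardExp a c b g} =>
      Ideal.Quotient.mk (intervalIdeal k a c b) (monomial (g : Fin n →₀ ℕ) (1 : k)) := by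
  have hmono : LinearIndependent k fun g : {g // IsStandardExp a c b g} =>
      (monomial (g : Fin n →₀ ℕ) (1 : k) : PS k n) := by
    have := (basisMonomials (Fin n) k).linearIndependent
    rw [coe_basisMonomials] at this
    exact this.comp _ Subtype.coe_injective
  refine hmono.map (f := (Ideal.Quotient.mkₐ k (intervalIdeal k a c b)).toLinearMap) ?_
  rw [Submodule.disjoint_def]
  intro p hp hker
  have hsupp : ↑p.support ⊆ {g | IsStandardExp a c b g} := by
    rw [← mem_restrictSupport_iff (R := k), restrictSupport_eq_span, Set.image_eq_range]
    exact hp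
  rw [LinearMap.mem_ker, AlgHom.toLinearMap_apply, Ideal.Quotient.mkₐ_eq_mk,
    Ideal.Quotient.eq_zero_iff_mem, mem_intervalIdeal_iff] at hker
  rw [← support_eq_empty, Finset.eq_empty_iff_forall_notMem]
  exact fun g hg => hker g hg (hsupp hg)

lemma span_mk_monomial_standard :
    Submodule.span k (Set.range fun g : {g // IsStandardExp a c b g} =>
      Ideal.Quotient.mk (intervalIdeal k a c b) (monomial (g : Fin n →₀ ℕ) (1 : k))) = ⊤ := by
  refine Submodule.eq_top_iff'.2 fun m => ?_
  obtain ⟨p, rfl⟩ := Ideal.Quotient.mkₐ_surjective k _ m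
  rw [← support_sum_monomial_coeff p, map_sum]
  refine Submodule.sum_mem _ fun g _ => ?_
  rw [← mul_one (coeff g p), ← smul_eq_mul, ← smul_monomial, map_smul]
  refine Submodule.smul_mem _ _ ?_
  by_cases hg : IsStandardExp a c b g
  · exact Submodule.subset_span ⟨⟨g, hg⟩, rfl⟩
  · rw [Ideal.Quotient.mkₐ_eq_mk, mk_monomial_eq_zero a c b hg]
    exact zero_mem _

end IntervalMod

section IntervalDecomp

variable {k : Type} [Field k] {n : ℕ} (a c b : Fin n → ℕ)

@[simp] lemma toFs_apply (d : Fin n → ℕ) (j : Fin n) : toFs d j = d j := rfl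

def freeVars : Finset (Fin n) := Finset.univ.filter fun j => a j ≤ b j

lemma card_freeVars : (freeVars a b).card = suppCardA a b := rfl

lemma StanleyDecomp.Z_subset_freeVars {grI : MGrading k n (IntervalMod k a c b)}
    (D : StanleyDecomp grI) (i : Fin D.s) : D.Z i ⊆ freeVars a b := by
  intro j hj
  by_contra hfree
  have hj' : b j < a j := by simpa [freeVars] using hfree
  exact D.notMem_Z_of_X_pow_smul_eq_zero (X_pow_smul_intervalMod a c b hj') i hj

/-- The largest standard exponent vanishing on the free variables. -/
noncomputable def topExp : Fin n →₀ ℕ := toFs fun j => if b j < a j then b j - c j else 0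

/-- An enumeration of the exponents `e ≤ topExp`; the monomials `x^e` generate the Stanley
spaces of `kₐ[c,b]`. -/
noncomputable def genExp (i : Fin (Finset.Iic (topExp a c b)).card) : Fin n →₀ ℕ :=
  (Finset.Iic (topExp a c b)).equivFin.symm i

lemma genExp_injective : Function.Injective (genExp a c b) :=
  Subtype.val_injective.comp (Finset.Iic (topExp a c b)).equivFin.symm.injective

lemma genExp_le_topExp (i : Fin (Finset.Iic (topExp a c b)).card) :
    genExp a c b i ≤ topExp a c b :=
  Finset.mem_Iic.1 ((Finset.Iic _).equivFin.symm i).2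

lemma genExp_apply_of_lt (i : Fin (Finset.Iic (topExp a c b)).card) {j : Fin n}
    (hj : b j < a j) : genExp a c b i j ≤ b j - c j := by
  simpa [topExp, hj] using Finsupp.le_def.1 (genExp_le_topExp a c b i) j

lemma genExp_apply_of_le (i : Fin (Finset.Iic (topExp a c b)).card) {j : Fin n}
    (hj : a j ≤ b j) : genExp a c b i j = 0 := by
  simpa [topExp, not_lt.2 hj] using Finsupp.le_def.1 (genExp_le_topExp a c b i) j

lemma apply_eq_zero_of_support_subset_freeVars {β : Fin n →₀ ℕ}
    (hβ : ∀ j ∈ β.support, j ∈ freeVars a b) {j : Fin n} (hj : b j < a j) : β j = 0 := by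
  by_contra h
  exact not_le.2 hj (by simpa [freeVars] using hβ j (Finsupp.mem_support_iff.2 h))

noncomputable def toStandardExp
    (p : Σ _ : Fin (Finset.Iic (topExp a c b)).card,
      {β : Fin n →₀ ℕ // ∀ j ∈ β.support, j ∈ freeVars a b}) :
    {g // IsStandardExp a c b g} :=
  ⟨p.2 + genExp a c b p.1, fun j hj => by
    simpa [apply_eq_zero_of_support_subset_freeVars a b p.2.2 hj] using
      genExp_apply_of_lt a c b p.1 hj⟩

lemma toStandardExp_bijective : Function.Bijective (toStandardExp a c b) := by
  constructor
  · rintro ⟨i, β, hβ⟩ ⟨i', β', hβ'⟩ h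
    have hsum : β + genExp a c b i = β' + genExp a c b i' := congrArg Subtype.val h
    have hgen : genExp a c b i = genExp a c b i' := by
      ext j
      have hj_sum := DFunLike.congr_fun hsum j
      simp only [Finsupp.add_apply] at hj_sum
      rcases lt_or_ge (b j) (a j) with hj | hj
      · rwa [apply_eq_zero_of_support_subset_freeVars a b hβ hj,
          apply_eq_zero_of_support_subset_freeVars a b hβ' hj, zero_add, zero_add] at hj_sum
      · rw [genExp_apply_of_le a c b i hj, genExp_apply_of_le a c b i' hj]
    obtain rfl := genExp_injective a c b hgen
    obtain rfl : β = β' := add_right_cancel hsum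
    rfl
  · rintro ⟨g, hg⟩
    have he : g.filter (fun j => b j < a j) ∈ Finset.Iic (topExp a c b) := by
      rw [Finset.mem_Iic, Finsupp.le_def]
      intro j
      by_cases hj : b j < a j <;> simp [topExp, hj, hg j]
    refine ⟨⟨(Finset.Iic _).equivFin ⟨_, he⟩, g.filter (fun j => ¬ b j < a j), fun j hj => ?_⟩, ?_⟩
    · simp_all [freeVars]
    · apply Subtype.ext
      simp only [toStandardExp, genExp, Equiv.symm_apply_apply]
      exact (add_comm _ _).trans (g.filter_add_filter_not _)

lemma monomial_smul_mk_monomial (β e : Fin n →₀ ℕ) :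
    (monomial β (1 : k) : PS k n) • Ideal.Quotient.mk (intervalIdeal k a c b) (monomial e 1) =
      Ideal.Quotient.mk (intervalIdeal k a c b) (monomial (β + e) 1) := by
  change Ideal.Quotient.mk _ (monomial β (1 : k) * monomial e 1) = _
  rw [monomial_mul, one_mul]

lemma mk_monomial_comp_toStandardExp :
    (fun g : {g // IsStandardExp a c b g} =>
      Ideal.Quotient.mk (intervalIdeal k a c b) (monomial (g : Fin n →₀ ℕ) (1 : k))) ∘
        toStandardExp a c b =
      fun p => (monomial (p.2 : Fin n →₀ ℕ) (1 : k) : PS k n) •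
        Ideal.Quotient.mk (intervalIdeal k a c b) (monomial (genExp a c b p.1) 1) := by
  funext p
  exact (monomial_smul_mk_monomial a c b _ _).symm

noncomputable def intervalStanleyDecomp (grI : MGrading k n (IntervalMod k a c b))
    (hI : ∀ d, grI.piece d = intervalPiece k a c b d) : StanleyDecomp grI :=
  StanleyDecomp.ofBasis
    (fun i => Ideal.Quotient.mk (intervalIdeal k a c b) (monomial (genExp a c b i) 1))
    (fun i => natDeg fun j => c j + genExp a c b i j) (fun _ => freeVars a b)
    (fun i => by
      rw [hI]
      refine Submodule.subset_span ⟨genExp a c b i, fun j => ?_, rfl⟩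
      simp only [natDeg, Nat.cast_add])
    (by
      rw [← mk_monomial_comp_toStandardExp]
      exact (linearIndependent_mk_monomial_standard a c b).comp _ (toStandardExp_bijective a c b).1)
    (by
      rw [← mk_monomial_comp_toStandardExp, (toStandardExp_bijective a c b).2.range_comp]
      exact span_mk_monomial_standard a c b)

end IntervalDecomp

theorem stmt4_general (k : Type) [Field k] (n : ℕ) (a c b : Fin n → ℕ)
    (grI : MGrading k n (IntervalMod k a c b))
    (hI : ∀ d, grI.piece d = intervalPiece k a c b d) :
    sdepth grI = suppCardA a b := by
  refine le_antisymm (sdepth_le fun D => ⟨⟨0, D.s_pos⟩, ?_⟩) ?_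
  · exact (Finset.card_le_card (D.Z_subset_freeVars a c b _)).trans_eq (card_freeVars a b)
  · exact le_sdepth (intervalStanleyDecomp a c b grI hI) fun _ => (card_freeVars a b).ge

theorem stmt4 (k : Type) [Field k] (n : ℕ) (a c b : Fin n → ℕ)
    (hcb : ∀ i, c i ≤ b i) (hba : ∀ i, b i ≤ a i)
    (grI : MGrading k n (IntervalMod k a c b))
    (hI : ∀ d, grI.piece d = intervalPiece k a c b d) :
    sdepth grI = suppCardA a b :=
  stmt4_general k n a c b grI hI
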